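/- arXiv:1204.6727 — 2 statements merged into one kernel-verified Lean document; each statement's English description precedes it below -/
import Mathlib

section
/- With Θ = g(δ, σ) and fluxes f_a = min{d_a, Θ C_a} (where d_a = δ_a C_a) and f_b = Σ_{a∈A} f_a ξ_{a→b}, the downstream flux satisfies f_b ≤ s_b for every b ∈ B, where s_b = C_b σ_b. -/
open scoped Classical
open Finset

/-- The average demand level of a set of upstream links. -/
noncomputable def gammaFn {ι : Type*} (C μ : ι → ℝ) (π : ℝ) (S : Finset ι) : ℝ :=
  (π + ∑ a ∈ S, C a * μ a) / ∑ a ∈ S, C a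

/-- The maximum of `f` over all nonempty subsets of a nonempty finite type. -/
noncomputable def maxSub {ι : Type*} [Fintype ι] (h : Nonempty ι) (f : Finset ι → ℝ) : ℝ :=
  (Finset.univ.powerset.filter Finset.Nonempty).sup'
    ⟨{h.some}, Finset.mem_filter.mpr
      ⟨Finset.mem_powerset.mpr (Finset.subset_univ _), Finset.singleton_nonempty _⟩⟩ f

/-- The residue supply `π_b = C_b σ_b − Σ_a C_{a→b} δ_a`. -/
noncomputable def resid {α β : Type*} [Fintype α] (Cb : β → ℝ) (Cab : α → β → ℝ)
    (δ : α → ℝ) (σ : β → ℝ) (b : β) : ℝ :=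
  Cb b * σ b - ∑ a, Cab a b * δ a

/-- The critical demand level `g(δ,σ) = min_b max_{∅ ≠ A₁ ⊆ A} γ_b(A₁)`. -/
noncomputable def criticalDemandLevel {α β : Type*} [Fintype α] [Fintype β]
    (hA : Nonempty α) (hB : Nonempty β) (Cb : β → ℝ) (Cab : α → β → ℝ)
    (δ : α → ℝ) (σ : β → ℝ) : ℝ :=
  Finset.univ.inf' Finset.univ_nonempty
    (fun b => maxSub hA (gammaFn (fun a => Cab a b) δ (resid Cb Cab δ σ b)))

/-- with `Θ = g(δ,σ)`, out-fluxes `f_a = min{d_a, Θ C_a}` and in-fluxes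
`f_b = Σ_a f_a ξ_{a→b}`, every downstream in-flux does not exceed the supply:
`f_b ≤ s_b` for all `b`. -/
theorem downstream_flux_le_supply
    {α β : Type*} [Fintype α] [Fintype β] (hA : Nonempty α) (hB : Nonempty β)
    (Ca : α → ℝ) (Cb : β → ℝ) (ξ : α → β → ℝ) (δ : α → ℝ) (σ : β → ℝ)
    (hCa : ∀ a, 0 < Ca a) (hCb : ∀ b, 0 < Cb b)
    (hξ : ∀ a b, 0 < ξ a b) (hξsum : ∀ a, ∑ b, ξ a b = 1)
    (hδ : ∀ a, δ a ∈ Set.Icc (0 : ℝ) 1) (hσ : ∀ b, σ b ∈ Set.Icc (0 : ℝ) 1) :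
    ∀ b : β,
      ∑ a, min (δ a * Ca a)
            (criticalDemandLevel hA hB Cb (fun a b => Ca a * ξ a b) δ σ * Ca a) * ξ a b
        ≤ σ b * Cb b := by

  intro b
  set Θ := criticalDemandLevel hA hB Cb (fun a b => Ca a * ξ a b) δ σ with hΘ
  set Cab : α → ℝ := fun a => Ca a * ξ a b with hCabdef
  have hCabpos : ∀ a, 0 < Cab a := fun a => mul_pos (hCa a) (hξ a b)
  set π := resid Cb (fun a b => Ca a * ξ a b) δ σ b with hπ
  have h1 : Θ ≤ maxSub hA (gammaFn Cab δ π) := by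
    have := Finset.inf'_le
      (fun b => maxSub hA (gammaFn (fun a => Ca a * ξ a b) δ
        (resid Cb (fun a b => Ca a * ξ a b) δ σ b))) (Finset.mem_univ b)
    exact this
  obtain ⟨S, hSmem, hSeq⟩ := Finset.exists_mem_eq_sup'
    (s := Finset.univ.powerset.filter Finset.Nonempty)
    ⟨{hA.some}, Finset.mem_filter.mpr
      ⟨Finset.mem_powerset.mpr (Finset.subset_univ _), Finset.singleton_nonempty _⟩⟩
    (gammaFn Cab δ π)
  have hSne : S.Nonempty := (Finset.mem_filter.mp hSmem).2
  have hmax : maxSub hA (gammaFn Cab δ π) = gammaFn Cab δ π S := hSeq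
  have hP : 0 < ∑ a ∈ S, Cab a := Finset.sum_pos (fun a _ => hCabpos a) hSne
  have h2 : Θ ≤ gammaFn Cab δ π S := hmax ▸ h1
  have h3 : Θ * ∑ a ∈ S, Cab a ≤ π + ∑ a ∈ S, Cab a * δ a := by
    have := (le_div_iff₀ hP).mp h2
    exact this
  have hsplit : ∑ a, Cab a * δ a = (∑ a ∈ Finset.univ \ S, Cab a * δ a)
      + ∑ a ∈ S, Cab a * δ a :=
    (Finset.sum_sdiff (Finset.subset_univ S)).symm
  have hπval : π = Cb b * σ b - ∑ a, Cab a * δ a := rfl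
  -- bound the total sum
  have hsum : ∑ a, min (δ a * Ca a) (Θ * Ca a) * ξ a b
      ≤ (∑ a ∈ Finset.univ \ S, Cab a * δ a) + Θ * (∑ a ∈ S, Cab a) := by
    rw [← Finset.sum_sdiff (Finset.subset_univ S), Finset.mul_sum]
    apply add_le_add
    · apply Finset.sum_le_sum
      intro a ha
      have : min (δ a * Ca a) (Θ * Ca a) ≤ δ a * Ca a := min_le_left _ _
      calc min (δ a * Ca a) (Θ * Ca a) * ξ a b ≤ δ a * Ca a * ξ a b :=
            mul_le_mul_of_nonneg_right this (hξ a b).le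
        _ = Cab a * δ a := by simp only [hCabdef]; ring
    · apply Finset.sum_le_sum
      intro a ha
      have : min (δ a * Ca a) (Θ * Ca a) ≤ Θ * Ca a := min_le_right _ _
      calc min (δ a * Ca a) (Θ * Ca a) * ξ a b ≤ Θ * Ca a * ξ a b :=
            mul_le_mul_of_nonneg_right this (hξ a b).le
        _ = Θ * Cab a := by simp only [hCabdef]; ring
  linarith [hsum, h3]
end

section
/- Monotonicity of the flux: with Θ(δ,σ) = g(δ,σ) as above and f_a(δ,σ) = min{δ_a C_a, Θ(δ,σ) C_a}, the value g(δ,σ) is nondecreasing in each σ_b and nonincreasing in each δ_α for α ≠ a; consequently, increasing any downstream supply level σ_b does not decrease any upstream flux f_a. -/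
open scoped Classical
open Finset

/-- `g(δ,σ)` is nondecreasing in the supply levels `σ` and nonincreasing in
the demand levels `δ`; consequently, increasing any downstream supply level does not
decrease any upstream flux `f_a = min{δ_a C_a, g(δ,σ) C_a}`. -/
theorem criticalDemandLevel_monotone
    {α β : Type*} [Fintype α] [Fintype β] (hA : Nonempty α) (hB : Nonempty β)
    (Ca : α → ℝ) (Cb : β → ℝ) (Cab : α → β → ℝ)
    (hCa : ∀ a, 0 < Ca a) (hCab : ∀ a b, 0 < Cab a b) (hCb : ∀ b, 0 < Cb b) :
    (∀ δ : α → ℝ, ∀ σ σ' : β → ℝ, (∀ b, σ b ≤ σ' b) →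
      criticalDemandLevel hA hB Cb Cab δ σ ≤ criticalDemandLevel hA hB Cb Cab δ σ') ∧
    (∀ δ δ' : α → ℝ, ∀ σ : β → ℝ, (∀ a, δ a ≤ δ' a) →
      criticalDemandLevel hA hB Cb Cab δ' σ ≤ criticalDemandLevel hA hB Cb Cab δ σ) ∧
    (∀ δ : α → ℝ, ∀ σ σ' : β → ℝ, (∀ b, σ b ≤ σ' b) → ∀ a : α,
      min (δ a * Ca a) (criticalDemandLevel hA hB Cb Cab δ σ * Ca a)
        ≤ min (δ a * Ca a) (criticalDemandLevel hA hB Cb Cab δ σ' * Ca a)) := by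
  have key : ∀ (δ δ' : α → ℝ) (σ σ' : β → ℝ), (∀ a, δ a ≤ δ' a) → (∀ b, σ b ≤ σ' b) →
      criticalDemandLevel hA hB Cb Cab δ' σ ≤ criticalDemandLevel hA hB Cb Cab δ σ' := by
    intro δ δ' σ σ' hδ hσ
    unfold criticalDemandLevel
    apply Finset.le_inf'
    intro b hb
    refine le_trans (Finset.inf'_le _ hb) ?_
    unfold maxSub
    apply Finset.sup'_mono_fun
    intro S hS
    have hSne : S.Nonempty := (Finset.mem_filter.mp hS).2
    have hden : 0 < ∑ a ∈ S, Cab a b := Finset.sum_pos (fun a _ => hCab a b) hSne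
    unfold gammaFn
    apply (div_le_div_iff_of_pos_right hden).mpr
    -- numerator inequality
    have e1 : ∑ a ∈ Finset.univ \ S, Cab a b * δ a + ∑ a ∈ S, Cab a b * δ a
        = ∑ a, Cab a b * δ a := Finset.sum_sdiff (Finset.subset_univ S)
    have e2 : ∑ a ∈ Finset.univ \ S, Cab a b * δ' a + ∑ a ∈ S, Cab a b * δ' a
        = ∑ a, Cab a b * δ' a := Finset.sum_sdiff (Finset.subset_univ S)
    have h1 : ∑ a ∈ Finset.univ \ S, Cab a b * δ a
        ≤ ∑ a ∈ Finset.univ \ S, Cab a b * δ' a :=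
      Finset.sum_le_sum fun a _ => mul_le_mul_of_nonneg_left (hδ a) (hCab a b).le
    have h2 : Cb b * σ b ≤ Cb b * σ' b :=
      mul_le_mul_of_nonneg_left (hσ b) (hCb b).le
    unfold resid
    linarith
  refine ⟨fun δ σ σ' h => key δ δ σ σ' (fun _ => le_rfl) h,
    fun δ δ' σ h => key δ δ' σ σ h (fun _ => le_rfl),
    fun δ σ σ' h a => min_le_min le_rfl
      (mul_le_mul_of_nonneg_right (key δ δ σ σ' (fun _ => le_rfl) h) (hCa a).le)⟩
end
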